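/- arXiv:2203.12726 — 3 statements merged into one kernel-verified Lean document; each statement's English description precedes it below -/
import Mathlib

section
/- Characterization of the randomized LASSO selection event in the single-covariate case: let Σ = [[1,ρ],[ρ,1]] with ρ ∈ (−1,1), let γ̂ = (α̂, β̂)' ∈ ℝ², ω = (ω₁, ω₂)' ∈ ℝ², λ > 0, N ≥ 1, and consider the strictly convex objective f(a,b) = (√N/2)·((a,b)' − γ̂)' Σ ((a,b)' − γ̂) − ω₁ a − ω₂ b + λ|b|. Then the unique minimizer (â, b̂) of f satisfies b̂ ≠ 0 with sign(b̂) = s if and only if s(ω₂ − ρω₁) + s(1 − ρ²)√N β̂ − λ > 0. -/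
/-!
Write `m = √N` and `T = ω₂ - ρ ω₁ + m (1 - ρ²) β̂`. Eliminating `a` leaves the one-dimensional
problem `m (1 - ρ²) b² / 2 - T b + λ |b|`, minimized by the soft-thresholding
`b̂ = S_λ(T) / (m (1 - ρ²))`; put `â = α̂ + ω₁ / m - ρ (b̂ - β̂)`. At `(â, b̂)` the partial
derivative in `a` vanishes and the one in `b` is `S_λ(T) - T`, whose negative is a subgradient
of `λ |·|` at `b̂`. The exact second-order expansion of `f` then gives
`f q - f (â, b̂) ≥ (m / 2) (q - (â, b̂))' Σ (q - (â, b̂)) > 0` for `q ≠ (â, b̂)`, so `(â, b̂)` is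
the unique minimizer, and `s b̂ > 0` iff `s T > λ`.
-/

/-- `S_λ(T)`, the minimizer of `(b - T)² / 2 + λ |b|`. -/
noncomputable def softThreshold (lam T : ℝ) : ℝ :=
  if lam < T then T - lam else if T < -lam then T + lam else 0

section SoftThreshold

variable {lam : ℝ} (T : ℝ)

lemma softThreshold_neg (hlam : 0 ≤ lam) : softThreshold lam (-T) = -softThreshold lam T := by
  unfold softThreshold
  split_ifs <;> linarith

lemma softThreshold_pos_iff (hlam : 0 ≤ lam) : 0 < softThreshold lam T ↔ lam < T := by
  unfold softThreshold
  split_ifs <;> constructor <;> intro <;> linarith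

lemma zero_lt_mul_softThreshold_iff (hlam : 0 ≤ lam) {s : ℝ} (hs : s = 1 ∨ s = -1) :
    0 < s * softThreshold lam T ↔ lam < s * T := by
  rcases hs with rfl | rfl
  · simpa only [one_mul] using softThreshold_pos_iff T hlam
  · simpa only [neg_one_mul, softThreshold_neg T hlam] using softThreshold_pos_iff (-T) hlam

lemma softThreshold_sub_mul_self :
    (softThreshold lam T - T) * softThreshold lam T = -lam * |softThreshold lam T| := by
  unfold softThreshold
  split_ifs with h₁ h₂
  · rw [abs_of_pos (by linarith)]; ring
  · rw [abs_of_neg (by linarith)]; ring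
  · simp

lemma abs_softThreshold_sub_le (hlam : 0 ≤ lam) : |softThreshold lam T - T| ≤ lam := by
  unfold softThreshold
  split_ifs <;> rw [abs_le] <;> constructor <;> linarith

end SoftThreshold

/-- `-d` is a subgradient of `lam * |·|` at `b`. -/
lemma mul_sub_add_mul_abs_sub_nonneg {d b lam : ℝ} (hdb : d * b = -lam * |b|) (hd : |d| ≤ lam)
    (q : ℝ) : 0 ≤ d * (q - b) + lam * (|q| - |b|) := by
  have hdq : |d * q| ≤ lam * |q| := by
    rw [abs_mul]
    exact mul_le_mul_of_nonneg_right hd (abs_nonneg q)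
  nlinarith [neg_abs_le (d * q)]

lemma sq_add_two_mul_mul_add_sq_pos {ρ u v : ℝ} (hρ : ρ ^ 2 < 1) (huv : (u, v) ≠ 0) :
    0 < u ^ 2 + 2 * ρ * u * v + v ^ 2 := by
  by_cases hv : v = 0
  · have hu : u ≠ 0 := fun hu => huv (by simp [hu, hv])
    simp only [hv, mul_zero, add_zero, ne_eq, OfNat.ofNat_ne_zero, not_false_eq_true, zero_pow]
    positivity
  · have hv2 : 0 < (1 - ρ ^ 2) * v ^ 2 := mul_pos (by linarith) (by positivity)
    nlinarith [sq_nonneg (u + ρ * v)]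

section RandomizedLasso

variable (m ρ lam α β ω₁ ω₂ : ℝ)

noncomputable def randomizedLassoObjective (p : ℝ × ℝ) : ℝ :=
  m / 2 * ((p.1 - α) ^ 2 + 2 * ρ * (p.1 - α) * (p.2 - β) + (p.2 - β) ^ 2)
    - ω₁ * p.1 - ω₂ * p.2 + lam * |p.2|

noncomputable def randomizedLassoSlope : ℝ :=
  softThreshold lam (ω₂ - ρ * ω₁ + m * (1 - ρ ^ 2) * β) / (m * (1 - ρ ^ 2))

noncomputable def randomizedLassoMinimizer : ℝ × ℝ :=
  (α + ω₁ / m - ρ * (randomizedLassoSlope m ρ lam β ω₁ ω₂ - β),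
    randomizedLassoSlope m ρ lam β ω₁ ω₂)

lemma randomizedLassoObjective_sub (p q : ℝ × ℝ) :
    randomizedLassoObjective m ρ lam α β ω₁ ω₂ q - randomizedLassoObjective m ρ lam α β ω₁ ω₂ p
      = (m * (p.1 - α) + m * ρ * (p.2 - β) - ω₁) * (q.1 - p.1)
        + (m * ρ * (p.1 - α) + m * (p.2 - β) - ω₂) * (q.2 - p.2)
        + lam * (|q.2| - |p.2|)
        + m / 2 * ((q.1 - p.1) ^ 2 + 2 * ρ * (q.1 - p.1) * (q.2 - p.2) + (q.2 - p.2) ^ 2) := by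
  unfold randomizedLassoObjective
  ring

variable {m ρ}

lemma randomizedLassoObjective_lt_of_optimality (hm : 0 < m) (hρ : ρ ^ 2 < 1) {p q : ℝ × ℝ}
    (hgrad_a : m * (p.1 - α) + m * ρ * (p.2 - β) - ω₁ = 0)
    (hgrad_b : (m * ρ * (p.1 - α) + m * (p.2 - β) - ω₂) * p.2 = -lam * |p.2|)
    (hgrad_b_le : |m * ρ * (p.1 - α) + m * (p.2 - β) - ω₂| ≤ lam) (hq : q ≠ p) :
    randomizedLassoObjective m ρ lam α β ω₁ ω₂ p
      < randomizedLassoObjective m ρ lam α β ω₁ ω₂ q := by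
  have hl1 := mul_sub_add_mul_abs_sub_nonneg hgrad_b hgrad_b_le q.2
  have hquad := sq_add_two_mul_mul_add_sq_pos (u := q.1 - p.1) (v := q.2 - p.2) hρ
    (by rwa [Ne, ← Prod.mk_sub_mk, sub_eq_zero])
  have hexp := randomizedLassoObjective_sub m ρ lam α β ω₁ ω₂ p q
  rw [hgrad_a, zero_mul, zero_add] at hexp
  nlinarith [mul_pos (half_pos hm) hquad]

lemma randomizedLassoObjective_minimizer_lt (hm : 0 < m) (hρ : ρ ^ 2 < 1) (hlam : 0 ≤ lam)
    {q : ℝ × ℝ} (hq : q ≠ randomizedLassoMinimizer m ρ lam α β ω₁ ω₂) :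
    randomizedLassoObjective m ρ lam α β ω₁ ω₂ (randomizedLassoMinimizer m ρ lam α β ω₁ ω₂)
      < randomizedLassoObjective m ρ lam α β ω₁ ω₂ q := by
  have hc : 0 < m * (1 - ρ ^ 2) := mul_pos hm (by linarith)
  set T := ω₂ - ρ * ω₁ + m * (1 - ρ ^ 2) * β
  have hS : softThreshold lam T = m * (1 - ρ ^ 2) * randomizedLassoSlope m ρ lam β ω₁ ω₂ := by
    rw [randomizedLassoSlope, mul_div_cancel₀ _ hc.ne']
  have hgrad_b : m * ρ * ((randomizedLassoMinimizer m ρ lam α β ω₁ ω₂).1 - α)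
      + m * ((randomizedLassoMinimizer m ρ lam α β ω₁ ω₂).2 - β) - ω₂
      = softThreshold lam T - T := by
    simp only [hS, randomizedLassoMinimizer]
    field_simp
    ring
  refine randomizedLassoObjective_lt_of_optimality lam α β ω₁ ω₂ hm hρ ?_ ?_ ?_ hq
  · simp only [randomizedLassoMinimizer]
    field_simp
    ring
  · have h := softThreshold_sub_mul_self (lam := lam) T
    rw [hS, abs_mul, abs_of_pos hc] at h
    rw [hgrad_b, hS]
    dsimp only [randomizedLassoMinimizer]
    exact mul_left_cancel₀ hc.ne' (by linear_combination h)
  · rw [hgrad_b]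
    exact abs_softThreshold_sub_le T hlam

end RandomizedLasso

lemma forall_le_iff_eq_of_forall_ne_lt {X Y : Type*} [Preorder Y] {f : X → Y} {p : X}
    (h : ∀ q, q ≠ p → f p < f q) (x : X) : (∀ q, f x ≤ f q) ↔ x = p := by
  constructor
  · intro hx
    by_contra hxp
    exact lt_irrefl _ ((h x hxp).trans_le (hx p))
  · rintro rfl q
    rcases eq_or_ne q x with rfl | hq
    · exact le_rfl
    · exact (h q hq).le

/-- Characterization of the randomized LASSO selection event in the
single-covariate case: for the strictly convex objective
`f(a,b) = (√N/2) ((a,b)' - γ̂)' Σ ((a,b)' - γ̂) - ω₁ a - ω₂ b + λ |b|` with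
`Σ = [[1, ρ], [ρ, 1]]`, the objective has a unique minimizer, and the minimizer `(â, b̂)`
satisfies `b̂ ≠ 0` with `sign(b̂) = s` (i.e. `s b̂ > 0`) if and only if
`s (ω₂ - ρ ω₁) + s (1 - ρ²) √N β̂ - λ > 0`. -/
theorem randomized_lasso_selection_event_characterization
    (ρ s lam αhat βhat ω₁ ω₂ : ℝ) (N : ℕ) (hN : 1 ≤ N)
    (hρ : ρ ∈ Set.Ioo (-1 : ℝ) 1) (hs : s = 1 ∨ s = -1) (hlam : 0 < lam)
    (f : ℝ × ℝ → ℝ)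
    (hf : f = fun p =>
      Real.sqrt N / 2 *
          ((p.1 - αhat) ^ 2 + 2 * ρ * (p.1 - αhat) * (p.2 - βhat) + (p.2 - βhat) ^ 2)
        - ω₁ * p.1 - ω₂ * p.2 + lam * |p.2|) :
    (∃! p : ℝ × ℝ, ∀ q : ℝ × ℝ, f p ≤ f q) ∧
      ∀ p : ℝ × ℝ, (∀ q : ℝ × ℝ, f p ≤ f q) →
        (0 < s * p.2 ↔
          0 < s * (ω₂ - ρ * ω₁) + s * (1 - ρ ^ 2) * Real.sqrt N * βhat - lam) := by
  have hm : 0 < Real.sqrt N := Real.sqrt_pos.mpr (by exact_mod_cast hN)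
  have hρ2 : ρ ^ 2 < 1 := by nlinarith [hρ.1, hρ.2]
  have hc : 0 < Real.sqrt N * (1 - ρ ^ 2) := mul_pos hm (by linarith)
  have hmin : ∀ p, (∀ q, f p ≤ f q) ↔ p = randomizedLassoMinimizer √N ρ lam αhat βhat ω₁ ω₂ :=
    hf ▸ forall_le_iff_eq_of_forall_ne_lt
      (fun _ hq => randomizedLassoObjective_minimizer_lt lam αhat βhat ω₁ ω₂ hm hρ2 hlam.le hq)
  refine ⟨⟨_, (hmin _).mpr rfl, fun p hp => (hmin p).mp hp⟩, fun p hp => ?_⟩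
  rw [(hmin p).mp hp, sub_pos, show s * (ω₂ - ρ * ω₁) + s * (1 - ρ ^ 2) * √N * βhat
    = s * (ω₂ - ρ * ω₁ + √N * (1 - ρ ^ 2) * βhat) by ring,
    ← zero_lt_mul_softThreshold_iff _ hlam.le hs]
  simp only [randomizedLassoMinimizer, randomizedLassoSlope, mul_div_assoc']
  exact div_pos_iff_of_pos_right hc
end

section
/- Relative efficiency gain of carving over splitting: let Σ be a symmetric positive definite (s+q)×(s+q) real matrix with smallest eigenvalue λ_min > 0, let H be a symmetric positive semidefinite (s+q)×(s+q) matrix whose largest eigenvalue is at most B_max ≥ 0, and let r ∈ (0,1). For any coordinate j, define V^carve_j = e_j'( (1−r)^{-1} Σ^{-1} − (1−r)^{-2} r² ((1−r)^{-1} r Σ + H)^{-1} ) e_j and V^split_j = (1−r)^{-1} e_j' Σ^{-1} e_j, where e_j is the j-th standard basis vector. Then (V^split_j)^{-1} (V^split_j − V^carve_j) ≥ (1−r)^{-1} r² ( (1−r)^{-1} r + B_max / λ_min )^{-1}. -/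
/-!
Put `c = r / (1 - r)` and `t = c + B_max / λ_min`. The eigenvalue bounds give `c Σ + H ⪯ t Σ` in
the Loewner order, and inversion reverses this order, so `((c Σ + H)⁻¹)_jj ≥ t⁻¹ (Σ⁻¹)_jj`. Since
`V^split_j - V^carve_j = c² ((c Σ + H)⁻¹)_jj`, the bound follows. Antitonicity of the inverse is
read off the variational formula `e ⬝ M⁻¹ e = max_x (2 x ⬝ e - x ⬝ M x)` for positive definite `M`.
-/

open Matrix Set

namespace Matrix

variable {n : Type*} [Fintype n]

theorem dotProduct_mulVec_le_div_smul_of_bounds {A B : Matrix n n ℝ} {a b : ℝ} (ha : 0 < a)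
    (hb : 0 ≤ b) (hA : ∀ x, a * (x ⬝ᵥ x) ≤ x ⬝ᵥ (A *ᵥ x)) (hB : ∀ x, x ⬝ᵥ (B *ᵥ x) ≤ b * (x ⬝ᵥ x))
    (x : n → ℝ) : x ⬝ᵥ (B *ᵥ x) ≤ x ⬝ᵥ ((b / a) • A) *ᵥ x :=
  calc x ⬝ᵥ (B *ᵥ x) ≤ b / a * (a * (x ⬝ᵥ x)) := by
        rw [← mul_assoc, div_mul_cancel₀ _ ha.ne']; exact hB x
    _ ≤ b / a * (x ⬝ᵥ (A *ᵥ x)) := by gcongr; exact hA x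
    _ = x ⬝ᵥ ((b / a) • A) *ᵥ x := by rw [smul_mulVec, dotProduct_smul, smul_eq_mul]

variable [DecidableEq n]

theorem PosDef.two_mul_dotProduct_sub_le_dotProduct_inv_mulVec {M : Matrix n n ℝ} (hM : M.PosDef)
    (x e : n → ℝ) : 2 * (x ⬝ᵥ e) - x ⬝ᵥ (M *ᵥ x) ≤ e ⬝ᵥ (M⁻¹ *ᵥ e) := by
  set y := M⁻¹ *ᵥ e
  have hMy : M *ᵥ y = e := by
    rw [mulVec_mulVec, mul_nonsing_inv _ (M.isUnit_iff_isUnit_det.mp hM.isUnit), one_mulVec]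
  have hsymm : y ⬝ᵥ (M *ᵥ x) = x ⬝ᵥ (M *ᵥ y) := by
    rw [dotProduct_mulVec, ← mulVec_transpose, ← conjTranspose_eq_transpose_of_trivial,
      hM.isHermitian.eq, dotProduct_comm]
  have hnonneg := hM.posSemidef.dotProduct_mulVec_nonneg (x - y)
  simp only [star_trivial, mulVec_sub, dotProduct_sub, sub_dotProduct, hsymm, hMy] at hnonneg
  rw [dotProduct_comm e y]
  linarith

theorem PosDef.dotProduct_inv_mulVec_le_of_forall_le {M S : Matrix n n ℝ} (hM : M.PosDef)
    (hS : IsUnit S.det) (hMS : ∀ x, x ⬝ᵥ (M *ᵥ x) ≤ x ⬝ᵥ (S *ᵥ x)) (e : n → ℝ) :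
    e ⬝ᵥ (S⁻¹ *ᵥ e) ≤ e ⬝ᵥ (M⁻¹ *ᵥ e) := by
  have hSx : S *ᵥ (S⁻¹ *ᵥ e) = e := by rw [mulVec_mulVec, mul_nonsing_inv _ hS, one_mulVec]
  have h := hM.two_mul_dotProduct_sub_le_dotProduct_inv_mulVec (S⁻¹ *ᵥ e) e
  have h' := hMS (S⁻¹ *ᵥ e)
  rw [hSx, dotProduct_comm _ e] at h'
  rw [dotProduct_comm _ e] at h
  linarith

end Matrix

theorem relative_efficiency_gain_carve_over_split_general
    {n : ℕ} (Sig H : Matrix (Fin n) (Fin n) ℝ)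
    (hSigpd : Sig.PosDef)
    (hHpsd : H.PosSemidef)
    (r lammin Bmax : ℝ) (hr : r ∈ Set.Ioo (0 : ℝ) 1)
    (hlam : 0 < lammin) (hB : 0 ≤ Bmax)
    -- `λ_min` is the smallest eigenvalue of `Σ`: lower bound on the quadratic form
    (hmin : ∀ x : Fin n → ℝ, lammin * (x ⬝ᵥ x) ≤ x ⬝ᵥ (Sig *ᵥ x))
    -- the largest eigenvalue of `H` is at most `B_max`
    (hmax : ∀ x : Fin n → ℝ, x ⬝ᵥ (H *ᵥ x) ≤ Bmax * (x ⬝ᵥ x))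
    (j : Fin n) :
    ((1 - r)⁻¹ * Sig⁻¹ j j)⁻¹ *
        ((1 - r)⁻¹ * Sig⁻¹ j j -
          ((1 - r)⁻¹ • Sig⁻¹ -
            (((1 - r)⁻¹ * r) ^ 2) • (((1 - r)⁻¹ * r) • Sig + H)⁻¹) j j)
      ≥ (1 - r)⁻¹ * r ^ 2 * ((1 - r)⁻¹ * r + Bmax / lammin)⁻¹ := by
  obtain ⟨hr0, hr1⟩ := hr
  have hs : 0 < 1 - r := sub_pos.mpr hr1
  set c := (1 - r)⁻¹ * r with hc_def
  set t := c + Bmax / lammin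
  have hc : 0 < c := by positivity
  have ht : 0 < t := by positivity
  have hSig : IsUnit Sig.det := Sig.isUnit_iff_isUnit_det.mp hSigpd.isUnit
  have hle : ∀ x, x ⬝ᵥ ((c • Sig + H) *ᵥ x) ≤ x ⬝ᵥ ((t • Sig) *ᵥ x) := fun x => by
    have := dotProduct_mulVec_le_div_smul_of_bounds hlam hB hmin hmax x
    rw [add_smul, add_mulVec, add_mulVec, dotProduct_add, dotProduct_add]
    linarith
  have hdiag : t⁻¹ * Sig⁻¹ j j ≤ (c • Sig + H)⁻¹ j j := by
    have hinv : (t • Sig)⁻¹ = t⁻¹ • Sig⁻¹ :=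
      inv_eq_left_inv (by simp [smul_smul, ht.ne', nonsing_inv_mul _ hSig])
    have := ((hSigpd.smul hc).add_posSemidef hHpsd).dotProduct_inv_mulVec_le_of_forall_le
      ((t • Sig).isUnit_iff_isUnit_det.mp (hSigpd.smul ht).isUnit) hle (Pi.single j 1)
    simpa [hinv] using this
  have hP : 0 < Sig⁻¹ j j := hSigpd.inv.diag_pos
  simp only [Matrix.sub_apply, Matrix.smul_apply, smul_eq_mul]
  calc (1 - r)⁻¹ * r ^ 2 * t⁻¹ ≤ (1 - r)⁻¹ * r ^ 2 * ((c • Sig + H)⁻¹ j j / Sig⁻¹ j j) := by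
        gcongr; exact (le_div_iff₀ hP).mpr hdiag
    _ = _ := by rw [hc_def]; field_simp; ring

/-- Relative efficiency gain of carving over splitting: with `Σ` symmetric
positive definite with smallest eigenvalue `λ_min > 0`, `H` symmetric positive semidefinite with
largest eigenvalue at most `B_max ≥ 0`, and `r ∈ (0,1)`, the `j`-th diagonal entries
`V^carve_j = ((1-r)⁻¹ Σ⁻¹ - (1-r)⁻² r² ((1-r)⁻¹ r Σ + H)⁻¹)_{jj}` and
`V^split_j = (1-r)⁻¹ (Σ⁻¹)_{jj}` satisfy
`(V^split_j)⁻¹ (V^split_j - V^carve_j) ≥ (1-r)⁻¹ r² ((1-r)⁻¹ r + B_max / λ_min)⁻¹`.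
The eigenvalue conditions are expressed through the corresponding quadratic-form bounds. -/
theorem relative_efficiency_gain_carve_over_split
    {n : ℕ} (Sig H : Matrix (Fin n) (Fin n) ℝ)
    (hSigpd : Sig.PosDef) (hSigsym : Sig.IsSymm)
    (hHpsd : H.PosSemidef) (hHsym : H.IsSymm)
    (r lammin Bmax : ℝ) (hr : r ∈ Set.Ioo (0 : ℝ) 1)
    (hlam : 0 < lammin) (hB : 0 ≤ Bmax)
    -- `λ_min` is the smallest eigenvalue of `Σ`: lower bound on the quadratic form
    (hmin : ∀ x : Fin n → ℝ, lammin * (x ⬝ᵥ x) ≤ x ⬝ᵥ (Sig *ᵥ x))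
    -- the largest eigenvalue of `H` is at most `B_max`
    (hmax : ∀ x : Fin n → ℝ, x ⬝ᵥ (H *ᵥ x) ≤ Bmax * (x ⬝ᵥ x))
    (j : Fin n) :
    ((1 - r)⁻¹ * Sig⁻¹ j j)⁻¹ *
        ((1 - r)⁻¹ * Sig⁻¹ j j -
          ((1 - r)⁻¹ • Sig⁻¹ -
            (((1 - r)⁻¹ * r) ^ 2) • (((1 - r)⁻¹ * r) • Sig + H)⁻¹) j j)
      ≥ (1 - r)⁻¹ * r ^ 2 * ((1 - r)⁻¹ * r + Bmax / lammin)⁻¹ :=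
  relative_efficiency_gain_carve_over_split_general Sig H hSigpd hHpsd r lammin Bmax hr hlam hB hmin
    hmax j
end

section
/- Strong convexity of the conjugate of the carved objective: let Σ̂ be a symmetric positive definite d×d real matrix with largest eigenvalue λ_max, let r ∈ (0,1), set c₂ = (1−r)^{-1} r, fix a ∈ ℝ^d, and let φ : ℝ^d → ℝ ∪ {+∞} be a proper convex lower semicontinuous function that is bounded below. Define D(γ) = (1/2) γ' Σ̂ γ + inf_{z ∈ ℝ^d} { (c₂/2)(z − γ + a)' Σ̂ (z − γ + a) + φ(z) }. Then D is convex, and its Fenchel conjugate D*(η) = sup_γ { γ'η − D(γ) } is strongly convex with strong convexity parameter at least (1−r) λ_max^{-1}. -/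
/-!
Write `q(x) = x ⬝ᵥ Σ̂ x` and `G(γ) = inf_z (c₂/2) q(z - γ + a) + φ(z)`, so that
`D = q/2 + G`. `G` is convex as a partial minimum of a function jointly convex in `(γ, z)`.
Since `q ≤ λ_max ‖·‖²`, every `γ ↦ (c₂/2) q(z - γ + a) - (c₂ λ_max/2) ‖γ‖²` is concave, hence so
is their infimum `G - (c₂ λ_max/2) ‖·‖²`. So `D` is convex and `D - (L/2) ‖·‖²` is concave for
`L = (1 + c₂) λ_max = λ_max / (1 - r)`, and the conjugate of such a function is `1/L`-strongly
convex.
-/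

open Matrix Set

variable {n : Type*} [Fintype n]

section QuadraticForm

lemma dotProduct_mulVec_convexCombination (A : Matrix n n ℝ) (x y : n → ℝ) {s t : ℝ}
    (hst : s + t = 1) :
    s * (x ⬝ᵥ A *ᵥ x) + t * (y ⬝ᵥ A *ᵥ y) =
      (s • x + t • y) ⬝ᵥ A *ᵥ (s • x + t • y) +
        s * t * ((x - y) ⬝ᵥ A *ᵥ (x - y)) := by
  simp only [mulVec_add, mulVec_smul, mulVec_sub, dotProduct_add, add_dotProduct,
    smul_dotProduct, dotProduct_smul, dotProduct_sub, sub_dotProduct, smul_eq_mul]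
  linear_combination (-(s * (x ⬝ᵥ A *ᵥ x) + t * (y ⬝ᵥ A *ᵥ y))) * hst

lemma convexOn_dotProduct_mulVec {A : Matrix n n ℝ} (hA : ∀ x, 0 ≤ x ⬝ᵥ A *ᵥ x) :
    ConvexOn ℝ univ (fun x => x ⬝ᵥ A *ᵥ x) := by
  refine ⟨convex_univ, fun x _ y _ s t hs ht hst => ?_⟩
  have hcomb := dotProduct_mulVec_convexCombination A x y hst
  simp only [smul_eq_mul]
  linarith [mul_nonneg (mul_nonneg hs ht) (hA (x - y))]

lemma concaveOn_dotProduct_mulVec_sub_sub {A : Matrix n n ℝ} {L : ℝ}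
    (hA : ∀ x, x ⬝ᵥ A *ᵥ x ≤ L * (x ⬝ᵥ x)) (w : n → ℝ) :
    ConcaveOn ℝ univ (fun x => (w - x) ⬝ᵥ A *ᵥ (w - x) - L * (x ⬝ᵥ x)) := by
  classical
  refine ⟨convex_univ, fun x _ y _ s t hs ht hst => ?_⟩
  have hcombA := dotProduct_mulVec_convexCombination A (w - y) (w - x) (add_comm s t ▸ hst)
  have hcomb1 := dotProduct_mulVec_convexCombination 1 x y hst
  have hw : t • (w - y) + s • (w - x) = w - (s • x + t • y) := by
    calc t • (w - y) + s • (w - x) = (s + t) • w - (s • x + t • y) := by module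
      _ = w - (s • x + t • y) := by rw [hst, one_smul]
  rw [sub_sub_sub_cancel_left, hw] at hcombA
  simp only [one_mulVec] at hcomb1
  simp only [smul_eq_mul]
  linear_combination
    hcombA - L * hcomb1 + mul_le_mul_of_nonneg_left (hA (x - y)) (mul_nonneg hs ht)

lemma Matrix.PosDef.dotProduct_le [DecidableEq n] {A : Matrix n n ℝ} (hA : A.PosDef)
    (x η : n → ℝ) : x ⬝ᵥ η ≤ (x ⬝ᵥ A *ᵥ x + A⁻¹ *ᵥ η ⬝ᵥ η) / 2 := by
  set w := A⁻¹ *ᵥ η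
  have hAw : A *ᵥ w = η := by
    rw [mulVec_mulVec, mul_nonsing_inv _ ((isUnit_iff_isUnit_det A).mp hA.isUnit), one_mulVec]
  have hsymm : w ⬝ᵥ A *ᵥ x = x ⬝ᵥ η := by
    rw [dotProduct_mulVec, ← mulVec_transpose, ← conjTranspose_eq_transpose_of_trivial,
      hA.isHermitian.eq, dotProduct_comm, hAw]
  have hnonneg := hA.posSemidef.dotProduct_mulVec_nonneg (x - w)
  simp only [star_trivial, mulVec_sub, dotProduct_sub, sub_dotProduct, hsymm, hAw] at hnonneg
  linarith [dotProduct_comm w η]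

end QuadraticForm

section Infimum

variable {E F : Type*} [AddCommGroup E] [Module ℝ E] [AddCommGroup F] [Module ℝ F]

lemma ConcaveOn.ciInf {ι : Sort*} [Nonempty ι] {s : Set E} {f : ι → E → ℝ}
    (hf : ∀ i, ConcaveOn ℝ s (f i)) (hbdd : ∀ x ∈ s, BddBelow (range fun i => f i x)) :
    ConcaveOn ℝ s (fun x => ⨅ i, f i x) := by
  refine ⟨(hf (Classical.arbitrary ι)).1, fun x hx y hy a b ha hb hab => le_ciInf fun i => ?_⟩
  dsimp only
  calc a • (⨅ i, f i x) + b • ⨅ i, f i y ≤ a • f i x + b • f i y := by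
        gcongr
        exacts [ciInf_le (hbdd x hx) i, ciInf_le (hbdd y hy) i]
    _ ≤ f i (a • x + b • y) := (hf i).2 hx hy ha hb hab

lemma ConvexOn.ciInf_prod {s : Set E} {t : Set F} [Nonempty t] {g : E → F → ℝ}
    (hg : ConvexOn ℝ (s ×ˢ t) (fun p => g p.1 p.2))
    (hbdd : ∀ x ∈ s, BddBelow (range fun z : t => g x z)) :
    ConvexOn ℝ s (fun x => ⨅ z : t, g x z) := by
  have hs : Convex ℝ s := by
    simpa [fst_image_prod s (Set.nonempty_coe_sort.mp ‹_›)] using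
      hg.1.linear_image (LinearMap.fst ℝ E F)
  refine ⟨hs, fun x hx y hy a b ha hb hab => le_of_forall_pos_le_add fun ε hε => ?_⟩
  dsimp only
  obtain ⟨zx, hzx⟩ := exists_lt_of_ciInf_lt (lt_add_of_pos_right (⨅ z : t, g x z) hε)
  obtain ⟨zy, hzy⟩ := exists_lt_of_ciInf_lt (lt_add_of_pos_right (⨅ z : t, g y z) hε)
  have hmem := hg.1 (mk_mem_prod hx zx.2) (mk_mem_prod hy zy.2) ha hb hab
  calc ⨅ z : t, g (a • x + b • y) z ≤ g (a • x + b • y) (a • zx + b • zy) :=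
        ciInf_le (hbdd _ (hs hx hy ha hb hab)) ⟨_, hmem.2⟩
    _ ≤ a • g x zx + b • g y zy := hg.2 (mk_mem_prod hx zx.2) (mk_mem_prod hy zy.2) ha hb hab
    _ ≤ a • ((⨅ z : t, g x z) + ε) + b • ((⨅ z : t, g y z) + ε) := by gcongr
    _ = a • (⨅ z : t, g x z) + b • (⨅ z : t, g y z) + ε := by
        simp only [smul_eq_mul]; linear_combination ε * hab

end Infimum

section ExtendedReal

variable {E : Type*} [AddCommGroup E] [Module ℝ E]

lemma EReal.toReal_iInf_coe_add {ι : Type*} (f : ι → ℝ) {φ : ι → EReal}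
    (hφ : ∀ i, φ i ≠ ⊥) [Nonempty {i | φ i ≠ ⊤}]
    (hbdd : BddBelow (range fun i : {i | φ i ≠ ⊤} => f i + (φ i).toReal)) :
    (⨅ i, (f i : EReal) + φ i).toReal = ⨅ i : {i | φ i ≠ ⊤}, f i + (φ i).toReal := by
  have hterm (i : {i | φ i ≠ ⊤}) : ((f i + (φ i).toReal : ℝ) : EReal) = f i + φ i := by
    rw [EReal.coe_add, EReal.coe_toReal i.2 (hφ i)]
  have hcoe := Monotone.map_ciInf_of_continuousAt continuous_coe_real_ereal.continuousAt
    EReal.coe_strictMono.monotone hbdd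
  simp only [hterm] at hcoe
  suffices ⨅ i, (f i : EReal) + φ i = ⨅ i : {i | φ i ≠ ⊤}, (f i : EReal) + φ i by
    rw [this, ← hcoe, EReal.toReal_coe]
  refine le_antisymm (le_iInf fun i => iInf_le _ _) (le_iInf fun i => ?_)
  by_cases hi : φ i = ⊤
  · simp [hi]
  · exact iInf_le_of_le ⟨i, hi⟩ le_rfl

lemma EReal.convexOn_toReal_setOf_ne_top {φ : E → EReal}
    (hφ : ∀ x y : E, ∀ s t : ℝ, 0 ≤ s → 0 ≤ t → s + t = 1 →
      φ (s • x + t • y) ≤ (s : EReal) * φ x + (t : EReal) * φ y)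
    (hbot : ∀ x, φ x ≠ ⊥) :
    ConvexOn ℝ {x | φ x ≠ ⊤} (fun x => (φ x).toReal) := by
  have hle {x y : E} (hx : φ x ≠ ⊤) (hy : φ y ≠ ⊤) {s t : ℝ} (hs : 0 ≤ s)
      (ht : 0 ≤ t) (hst : s + t = 1) :
      φ (s • x + t • y) ≤ ((s * (φ x).toReal + t * (φ y).toReal : ℝ) : EReal) := by
    rw [EReal.coe_add, EReal.coe_mul, EReal.coe_mul, EReal.coe_toReal hx (hbot x),
      EReal.coe_toReal hy (hbot y)]
    exact hφ x y s t hs ht hst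
  refine ⟨fun x hx y hy s t hs ht hst => ne_top_of_le_ne_top (EReal.coe_ne_top _)
    (hle hx hy hs ht hst), fun x hx y hy s t hs ht hst => ?_⟩
  have h := EReal.toReal_le_toReal (hle hx hy hs ht hst) (hbot _) (EReal.coe_ne_top _)
  rwa [EReal.toReal_coe] at h

end ExtendedReal

section InfimalConvolution

variable {A : Matrix n n ℝ} {c m : ℝ} {t : Set (n → ℝ)} {ψ : (n → ℝ) → ℝ}

/-- The infimal term of the carved objective, with `φ` replaced by its real-valued restriction
`ψ` to its effective domain `t`. -/
noncomputable def quadInfConv (A : Matrix n n ℝ) (c : ℝ) (a : n → ℝ) (t : Set (n → ℝ))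
    (ψ : (n → ℝ) → ℝ) (γ : n → ℝ) : ℝ :=
  ⨅ z : t, c / 2 * (((z : n → ℝ) - γ + a) ⬝ᵥ A *ᵥ ((z : n → ℝ) - γ + a)) + ψ z

lemma le_quadInfConv_term (hA : ∀ x, 0 ≤ x ⬝ᵥ A *ᵥ x) (hc : 0 ≤ c)
    (hψ : ∀ z ∈ t, m ≤ ψ z) (a γ : n → ℝ) {z : n → ℝ} (hz : z ∈ t) :
    m ≤ c / 2 * ((z - γ + a) ⬝ᵥ A *ᵥ (z - γ + a)) + ψ z := by
  have := mul_nonneg (div_nonneg hc zero_le_two) (hA (z - γ + a))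
  linarith [hψ z hz]

lemma bddBelow_quadInfConv_terms (hA : ∀ x, 0 ≤ x ⬝ᵥ A *ᵥ x) (hc : 0 ≤ c)
    (hψ : ∀ z ∈ t, m ≤ ψ z) (a γ : n → ℝ) :
    BddBelow (range fun z : t =>
      c / 2 * (((z : n → ℝ) - γ + a) ⬝ᵥ A *ᵥ ((z : n → ℝ) - γ + a)) + ψ z) :=
  ⟨m, forall_mem_range.2 fun z => le_quadInfConv_term hA hc hψ a γ z.2⟩

lemma le_quadInfConv [Nonempty t] (hA : ∀ x, 0 ≤ x ⬝ᵥ A *ᵥ x) (hc : 0 ≤ c)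
    (hψ : ∀ z ∈ t, m ≤ ψ z) (a γ : n → ℝ) : m ≤ quadInfConv A c a t ψ γ :=
  le_ciInf fun z => le_quadInfConv_term hA hc hψ a γ z.2

lemma convexOn_quadInfConv [Nonempty t] (hA : ∀ x, 0 ≤ x ⬝ᵥ A *ᵥ x) (hc : 0 ≤ c)
    (hψconv : ConvexOn ℝ t ψ) (hψ : ∀ z ∈ t, m ≤ ψ z) (a : n → ℝ) :
    ConvexOn ℝ univ (quadInfConv A c a t ψ) := by
  refine ConvexOn.ciInf_prod
    (g := fun γ z => c / 2 * ((z - γ + a) ⬝ᵥ A *ᵥ (z - γ + a)) + ψ z) ?_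
    fun γ _ => bddBelow_quadInfConv_terms hA hc hψ a γ
  have hquad : ConvexOn ℝ univ
      (fun p : (n → ℝ) × (n → ℝ) => (p.2 - p.1 + a) ⬝ᵥ A *ᵥ (p.2 - p.1 + a)) :=
    ⟨convex_univ, fun p _ q _ =>
      (((convexOn_dotProduct_mulVec hA).translate_left a).comp_linearMap
        (LinearMap.snd ℝ (n → ℝ) (n → ℝ) - LinearMap.fst ℝ (n → ℝ) (n → ℝ))).2
        trivial trivial⟩
  have hψsnd : ConvexOn ℝ (univ ×ˢ t) (fun p : (n → ℝ) × (n → ℝ) => ψ p.2) := by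
    rw [univ_prod]
    exact hψconv.comp_linearMap (LinearMap.snd ℝ (n → ℝ) (n → ℝ))
  exact ((hquad.subset (subset_univ _) hψsnd.1).smul (div_nonneg hc zero_le_two)).add hψsnd

lemma concaveOn_quadInfConv_sub [Nonempty t] {L : ℝ} (hA : ∀ x, 0 ≤ x ⬝ᵥ A *ᵥ x)
    (hAL : ∀ x, x ⬝ᵥ A *ᵥ x ≤ L * (x ⬝ᵥ x)) (hc : 0 ≤ c)
    (hψ : ∀ z ∈ t, m ≤ ψ z) (a : n → ℝ) :
    ConcaveOn ℝ univ (fun γ => quadInfConv A c a t ψ γ - c * L / 2 * (γ ⬝ᵥ γ)) := by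
  set h := fun (z : t) (γ : n → ℝ) =>
    c / 2 * (((z : n → ℝ) + a - γ) ⬝ᵥ A *ᵥ ((z : n → ℝ) + a - γ) - L * (γ ⬝ᵥ γ)) +
      ψ z
  have hconc (z : t) : ConcaveOn ℝ univ (h z) :=
    ((concaveOn_dotProduct_mulVec_sub_sub hAL ((z : n → ℝ) + a)).smul
      (div_nonneg hc zero_le_two)).add_const _
  have hbdd (γ : n → ℝ) : BddBelow (range fun z => h z γ) := by
    refine ⟨m - c * L / 2 * (γ ⬝ᵥ γ), forall_mem_range.2 fun z => ?_⟩
    have := le_quadInfConv_term hA hc hψ a γ z.2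
    rw [sub_add_eq_add_sub] at this
    simp only [h]
    linarith
  refine (ConcaveOn.ciInf hconc fun γ _ => hbdd γ).congr fun γ _ => ?_
  rw [quadInfConv, sub_eq_add_neg _ (c * L / 2 * _),
    ciInf_add (bddBelow_quadInfConv_terms hA hc hψ a γ)]
  simp only [h, sub_add_eq_add_sub]
  congr 1 with z
  ring

end InfimalConvolution

/-- With `g := L/2 ‖·‖² - f`, substituting `γ = L⁻¹ η + u` writes `f*(η) - ‖η‖²/(2L)` as
the supremum over `u` of the functions `η ↦ g (L⁻¹ η + u) - L/2 ‖u‖²`, each convex in `η`. -/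
lemma convexOn_conjugate_sub_of_concaveOn_sub {f : (n → ℝ) → ℝ} {L : ℝ} (hL : 0 < L)
    (hf : ConcaveOn ℝ univ (fun x => f x - L / 2 * (x ⬝ᵥ x)))
    (hbdd : ∀ η, BddAbove (range fun γ => γ ⬝ᵥ η - f γ)) :
    ConvexOn ℝ univ (fun η => (⨆ γ, γ ⬝ᵥ η - f γ) - L⁻¹ / 2 * (η ⬝ᵥ η)) := by
  set g := fun x => L / 2 * (x ⬝ᵥ x) - f x
  have hg : ConvexOn ℝ univ g := hf.neg.congr fun x _ => neg_sub _ _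
  have hsubst (η u : n → ℝ) :
      (L⁻¹ • η + u) ⬝ᵥ η - f (L⁻¹ • η + u) - L⁻¹ / 2 * (η ⬝ᵥ η) =
        g (L⁻¹ • η + u) - L / 2 * (u ⬝ᵥ u) := by
    simp only [g, add_dotProduct, dotProduct_add, smul_dotProduct, dotProduct_smul, smul_eq_mul,
      dotProduct_comm η u]
    field_simp
    ring
  have hle (η u : n → ℝ) :
      g (L⁻¹ • η + u) - L / 2 * (u ⬝ᵥ u) ≤
        (⨆ γ, γ ⬝ᵥ η - f γ) - L⁻¹ / 2 * (η ⬝ᵥ η) := by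
    rw [← hsubst]
    exact sub_le_sub_right (le_ciSup (hbdd η) _) _
  refine ⟨convex_univ, fun η₀ _ η₁ _ s t hs ht hst => ?_⟩
  simp only [smul_eq_mul]
  rw [sub_le_iff_le_add]
  refine ciSup_le fun γ => ?_
  set u := γ - L⁻¹ • (s • η₀ + t • η₁)
  have hγ : s • (L⁻¹ • η₀ + u) + t • (L⁻¹ • η₁ + u) = γ := by
    calc s • (L⁻¹ • η₀ + u) + t • (L⁻¹ • η₁ + u)
        _ = L⁻¹ • (s • η₀ + t • η₁) + (s + t) • u := by module
        _ = γ := by rw [hst, one_smul, add_sub_cancel]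
  have hconv :=
    hg.2 (mem_univ (L⁻¹ • η₀ + u)) (mem_univ (L⁻¹ • η₁ + u)) hs ht hst
  rw [hγ] at hconv
  have key := hsubst (s • η₀ + t • η₁) u
  simp only [u, add_sub_cancel] at key
  simp only [smul_eq_mul] at hconv
  linear_combination key + hconv + s * hle η₀ u + t * hle η₁ u + L / 2 * (u ⬝ᵥ u) * hst

theorem conjugate_of_carved_objective_strongly_convex_general
    {d : ℕ} (Sig : Matrix (Fin d) (Fin d) ℝ)
    (hSigpd : Sig.PosDef)
    (lammax : ℝ) (hlam : 0 < lammax)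
    -- `λ_max` is the largest eigenvalue of `Σ̂`: upper bound on the quadratic form
    (hmax : ∀ x : Fin d → ℝ, x ⬝ᵥ (Sig *ᵥ x) ≤ lammax * (x ⬝ᵥ x))
    (r : ℝ) (hr : r ∈ Set.Ioo (0 : ℝ) 1)
    (c₂ : ℝ) (hc₂ : c₂ = (1 - r)⁻¹ * r)
    (a : Fin d → ℝ)
    (φ : (Fin d → ℝ) → EReal)
    -- `φ` is convex
    (hφconv : ∀ x y : Fin d → ℝ, ∀ s t : ℝ, 0 ≤ s → 0 ≤ t → s + t = 1 →
      φ (s • x + t • y) ≤ (s : EReal) * φ x + (t : EReal) * φ y)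
    -- `φ` is proper (never `-∞`, not identically `+∞`)
    (hφne_bot : ∀ z, φ z ≠ ⊥) (hφproper : ∃ z, φ z ≠ ⊤)
    -- `φ` is bounded below
    (hφbdd : ∃ m : ℝ, ∀ z, (m : EReal) ≤ φ z)
    -- the carved objective `D`
    (D : (Fin d → ℝ) → ℝ)
    (hD : D = fun γ => (1 / 2) * (γ ⬝ᵥ (Sig *ᵥ γ)) +
      (⨅ z : Fin d → ℝ,
        (((c₂ / 2) * ((z - γ + a) ⬝ᵥ (Sig *ᵥ (z - γ + a))) : ℝ) : EReal) + φ z).toReal)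
    -- the Fenchel conjugate `D*`
    (Dstar : (Fin d → ℝ) → ℝ)
    (hDstar : Dstar = fun η => ⨆ γ : Fin d → ℝ, (γ ⬝ᵥ η - D γ)) :
    ConvexOn ℝ Set.univ D ∧
      ConvexOn ℝ Set.univ (fun η => Dstar η - (1 - r) * lammax⁻¹ / 2 * (η ⬝ᵥ η)) := by
  obtain ⟨hr0, hr1⟩ := hr
  obtain ⟨m, hm⟩ := hφbdd
  obtain ⟨z₀, hz₀⟩ := hφproper
  have : Nonempty {z | φ z ≠ ⊤} := ⟨⟨z₀, hz₀⟩⟩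
  have hc₂0 : 0 ≤ c₂ := by rw [hc₂]; exact mul_nonneg (inv_nonneg.2 (by linarith)) hr0.le
  have hSig : ∀ x, 0 ≤ x ⬝ᵥ Sig *ᵥ x := by
    simpa using hSigpd.posSemidef.dotProduct_mulVec_nonneg
  have hψ : ∀ z ∈ {z | φ z ≠ ⊤}, m ≤ (φ z).toReal := fun z hz =>
    EReal.coe_le_coe_iff.1 <| (EReal.coe_toReal hz (hφne_bot z)).symm ▸ hm z
  have hG (γ : Fin d → ℝ) := EReal.toReal_iInf_coe_add
    (fun z => c₂ / 2 * ((z - γ + a) ⬝ᵥ Sig *ᵥ (z - γ + a))) hφne_bot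
    (bddBelow_quadInfConv_terms hSig hc₂0 hψ a γ)
  simp only [hG] at hD
  change D = fun γ => 1 / 2 * (γ ⬝ᵥ Sig *ᵥ γ) +
    quadInfConv Sig c₂ a {z | φ z ≠ ⊤} (fun z => (φ z).toReal) γ at hD
  subst hD hDstar
  have hL : ((1 + c₂) * lammax)⁻¹ = (1 - r) * lammax⁻¹ := by
    rw [hc₂]; field_simp [(by linarith : (1 - r) ≠ 0)]; ring
  rw [← hL]
  refine ⟨((convexOn_dotProduct_mulVec hSig).smul (by norm_num : (0 : ℝ) ≤ 1 / 2)).add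
    (convexOn_quadInfConv hSig hc₂0 (EReal.convexOn_toReal_setOf_ne_top hφconv hφne_bot) hψ a),
    convexOn_conjugate_sub_of_concaveOn_sub (mul_pos (by linarith) hlam) ?_ fun η => ?_⟩
  · refine (((concaveOn_dotProduct_mulVec_sub_sub hmax 0).smul
      (by norm_num : (0 : ℝ) ≤ 1 / 2)).add
        (concaveOn_quadInfConv_sub hSig hmax hc₂0 hψ a)).congr fun γ _ => ?_
    simp only [Pi.add_apply, zero_sub, mulVec_neg, neg_dotProduct_neg, smul_eq_mul]
    ring
  · refine ⟨(Sig⁻¹ *ᵥ η ⬝ᵥ η) / 2 - m, forall_mem_range.2 fun γ => ?_⟩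
    linarith [hSigpd.dotProduct_le γ η, le_quadInfConv hSig hc₂0 hψ a γ]

/-- Strong convexity of the conjugate of the carved objective: with `Σ̂`
symmetric positive definite with largest eigenvalue `λ_max`, `r ∈ (0,1)`, `c₂ = (1-r)⁻¹ r`,
`a ∈ ℝ^d`, and `φ : ℝ^d → ℝ ∪ {+∞}` proper convex lower semicontinuous and bounded below
(formalized with values in `EReal`), the function
`D(γ) = ½ γ' Σ̂ γ + inf_z { (c₂/2)(z - γ + a)' Σ̂ (z - γ + a) + φ(z) }` is convex, and its
Fenchel conjugate `D*(η) = sup_γ { γ'η - D(γ) }` is strongly convex with parameter at least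
`(1-r) λ_max⁻¹`, i.e. `D*(η) - ((1-r) λ_max⁻¹ / 2) ‖η‖²` is convex (Euclidean norm,
`‖η‖² = η ⬝ᵥ η`). -/
theorem conjugate_of_carved_objective_strongly_convex
    {d : ℕ} (Sig : Matrix (Fin d) (Fin d) ℝ)
    (hSigpd : Sig.PosDef) (hSigsym : Sig.IsSymm)
    (lammax : ℝ) (hlam : 0 < lammax)
    -- `λ_max` is the largest eigenvalue of `Σ̂`: upper bound on the quadratic form
    (hmax : ∀ x : Fin d → ℝ, x ⬝ᵥ (Sig *ᵥ x) ≤ lammax * (x ⬝ᵥ x))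
    (r : ℝ) (hr : r ∈ Set.Ioo (0 : ℝ) 1)
    (c₂ : ℝ) (hc₂ : c₂ = (1 - r)⁻¹ * r)
    (a : Fin d → ℝ)
    (φ : (Fin d → ℝ) → EReal)
    -- `φ` is convex
    (hφconv : ∀ x y : Fin d → ℝ, ∀ s t : ℝ, 0 ≤ s → 0 ≤ t → s + t = 1 →
      φ (s • x + t • y) ≤ (s : EReal) * φ x + (t : EReal) * φ y)
    -- `φ` is lower semicontinuous
    (hφlsc : LowerSemicontinuous φ)
    -- `φ` is proper (never `-∞`, not identically `+∞`)
    (hφne_bot : ∀ z, φ z ≠ ⊥) (hφproper : ∃ z, φ z ≠ ⊤)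
    -- `φ` is bounded below
    (hφbdd : ∃ m : ℝ, ∀ z, (m : EReal) ≤ φ z)
    -- the carved objective `D`
    (D : (Fin d → ℝ) → ℝ)
    (hD : D = fun γ => (1 / 2) * (γ ⬝ᵥ (Sig *ᵥ γ)) +
      (⨅ z : Fin d → ℝ,
        (((c₂ / 2) * ((z - γ + a) ⬝ᵥ (Sig *ᵥ (z - γ + a))) : ℝ) : EReal) + φ z).toReal)
    -- the Fenchel conjugate `D*`
    (Dstar : (Fin d → ℝ) → ℝ)
    (hDstar : Dstar = fun η => ⨆ γ : Fin d → ℝ, (γ ⬝ᵥ η - D γ)) :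
    ConvexOn ℝ Set.univ D ∧
      ConvexOn ℝ Set.univ (fun η => Dstar η - (1 - r) * lammax⁻¹ / 2 * (η ⬝ᵥ η)) :=
  conjugate_of_carved_objective_strongly_convex_general Sig hSigpd lammax hlam hmax r hr c₂ hc₂ a φ
    hφconv hφne_bot hφproper hφbdd D hD Dstar hDstar
end
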